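/- arXiv:1803.10884 — 2 statements merged into one kernel-verified Lean document; each statement's English description precedes it below -/
import Mathlib

section
/- Let $E \subset \mathbb{R}^d$ be finite with $|a - b| \geq r > 0$ for all distinct $a, b \in E$. Let $P = \{(f(a), D_a f)\}_{a \in E}$ be a 1-field such that $\sqrt{|f(a)|^2 + |D_a f|^2} \leq \rho$ for all $a \in E$, where $\rho \leq \frac{M r^2}{8(1+r)}$. Then for all distinct $a, b \in E$ and all $x$ in the closed ball centered at $\frac{a+b}{2}$ of radius $\frac{|a-b|}{2}$, one has $\frac{2|P_a(x) - P_b(x)|}{|a-x|^2 + |b-x|^2} \leq M$. -/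
open scoped RealInnerProductSpace

set_option maxHeartbeats 1000000 in
/-- If the points of a finite set `E` are `r`-separated and the 1-field
`P = {(f a, Df a)}_{a ∈ E}` satisfies `√(f(a)² + |Df a|²) ≤ ρ ≤ M r² / (8(1+r))`,
then for all distinct `a, b ∈ E` and all `x` in the closed ball centered at `(a+b)/2`
of radius `|a-b|/2`, we have `2 |Pₐ(x) - P_b(x)| / (|a-x|² + |b-x|²) ≤ M`. -/
theorem stmt2 {d : ℕ} (E : Finset (EuclideanSpace ℝ (Fin d)))
    (f : EuclideanSpace ℝ (Fin d) → ℝ)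
    (Df : EuclideanSpace ℝ (Fin d) → EuclideanSpace ℝ (Fin d))
    (r M ρ : ℝ) (hr : 0 < r) (hM : 0 < M)
    (hsep : ∀ a ∈ E, ∀ b ∈ E, a ≠ b → r ≤ ‖a - b‖)
    (hρ : ∀ a ∈ E, Real.sqrt (f a ^ 2 + ‖Df a‖ ^ 2) ≤ ρ)
    (hρM : ρ ≤ M * r ^ 2 / (8 * (1 + r))) :
    ∀ a ∈ E, ∀ b ∈ E, a ≠ b →
      ∀ x ∈ Metric.closedBall ((2 : ℝ)⁻¹ • (a + b)) (‖a - b‖ / 2),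
        2 * |(f a + ⟪Df a, x - a⟫) - (f b + ⟪Df b, x - b⟫)| /
          (‖a - x‖ ^ 2 + ‖b - x‖ ^ 2) ≤ M := by
  intro a ha b hb hab x hx
  set s : ℝ := ‖a - b‖ with hs_def
  have hs : r ≤ s := hsep a ha b hb hab
  have hspos : 0 < s := lt_of_lt_of_le hr hs
  -- bounds on f and Df from hρ
  have key : ∀ c ∈ E, |f c| ≤ ρ ∧ ‖Df c‖ ≤ ρ := by
    intro c hc
    have h := hρ c hc
    have h1 : |f c| ≤ Real.sqrt (f c ^ 2 + ‖Df c‖ ^ 2) := by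
      rw [← Real.sqrt_sq_eq_abs]
      exact Real.sqrt_le_sqrt (by nlinarith [sq_nonneg ‖Df c‖])
    have h2 : ‖Df c‖ ≤ Real.sqrt (f c ^ 2 + ‖Df c‖ ^ 2) := by
      nth_rewrite 1 [← Real.sqrt_sq (norm_nonneg _)]
      exact Real.sqrt_le_sqrt (by nlinarith [sq_nonneg (f c)])
    exact ⟨h1.trans h, h2.trans h⟩
  obtain ⟨hfa, hDa⟩ := key a ha
  obtain ⟨hfb, hDb⟩ := key b hb
  have hρ0 : 0 ≤ ρ := le_trans (Real.sqrt_nonneg _) (hρ a ha)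
  -- x close to both a and b
  have hxm : ‖x - (2 : ℝ)⁻¹ • (a + b)‖ ≤ s / 2 := by
    simpa [dist_eq_norm] using hx
  have hxa : ‖x - a‖ ≤ s := by
    have h1 : x - a = (x - (2 : ℝ)⁻¹ • (a + b)) + (2 : ℝ)⁻¹ • (b - a) := by
      module
    have h2 : ‖(2 : ℝ)⁻¹ • (b - a)‖ = s / 2 := by
      rw [norm_smul, ← norm_neg (b - a)]
      simp [hs_def, neg_sub]
      ring
    calc ‖x - a‖ ≤ ‖x - (2 : ℝ)⁻¹ • (a + b)‖ + ‖(2 : ℝ)⁻¹ • (b - a)‖ := by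
          rw [h1]; exact norm_add_le _ _
      _ ≤ s / 2 + s / 2 := by rw [h2]; linarith
      _ = s := by ring
  have hxb : ‖x - b‖ ≤ s := by
    have h1 : x - b = (x - (2 : ℝ)⁻¹ • (a + b)) + (2 : ℝ)⁻¹ • (a - b) := by
      module
    have h2 : ‖(2 : ℝ)⁻¹ • (a - b)‖ = s / 2 := by
      rw [norm_smul]; simp [hs_def]; ring
    calc ‖x - b‖ ≤ ‖x - (2 : ℝ)⁻¹ • (a + b)‖ + ‖(2 : ℝ)⁻¹ • (a - b)‖ := by
          rw [h1]; exact norm_add_le _ _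
      _ ≤ s / 2 + s / 2 := by rw [h2]; linarith
      _ = s := by ring
  -- denominator lower bound
  have hA : ‖a - x‖ = ‖x - a‖ := by rw [← norm_neg]; simp
  have hB : ‖b - x‖ = ‖x - b‖ := by rw [← norm_neg]; simp
  have htri : s ≤ ‖a - x‖ + ‖b - x‖ := by
    have : a - b = (a - x) - (b - x) := by abel
    calc s = ‖(a - x) - (b - x)‖ := by rw [← this]
      _ ≤ ‖a - x‖ + ‖b - x‖ := norm_sub_le _ _
  have hdenom : s ^ 2 / 2 ≤ ‖a - x‖ ^ 2 + ‖b - x‖ ^ 2 := by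
    nlinarith [sq_nonneg (‖a - x‖ - ‖b - x‖), norm_nonneg (a - x), norm_nonneg (b - x)]
  have hdpos : 0 < ‖a - x‖ ^ 2 + ‖b - x‖ ^ 2 := lt_of_lt_of_le (by positivity) hdenom
  -- numerator bound
  have hia : |⟪Df a, x - a⟫| ≤ ρ * s := by
    calc |⟪Df a, x - a⟫| ≤ ‖Df a‖ * ‖x - a‖ := abs_real_inner_le_norm _ _
      _ ≤ ρ * s := by
        apply mul_le_mul hDa hxa (norm_nonneg _) hρ0
  have hib : |⟪Df b, x - b⟫| ≤ ρ * s := by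
    calc |⟪Df b, x - b⟫| ≤ ‖Df b‖ * ‖x - b‖ := abs_real_inner_le_norm _ _
      _ ≤ ρ * s := by
        apply mul_le_mul hDb hxb (norm_nonneg _) hρ0
  have hnum : |(f a + ⟪Df a, x - a⟫) - (f b + ⟪Df b, x - b⟫)| ≤ 2 * ρ + 2 * ρ * s := by
    have := abs_sub (f a + ⟪Df a, x - a⟫) (f b + ⟪Df b, x - b⟫)
    have h1 := abs_add_le (f a) ⟪Df a, x - a⟫
    have h2 := abs_add_le (f b) ⟪Df b, x - b⟫
    calc |(f a + ⟪Df a, x - a⟫) - (f b + ⟪Df b, x - b⟫)|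
        ≤ |f a + ⟪Df a, x - a⟫| + |f b + ⟪Df b, x - b⟫| := abs_sub _ _
      _ ≤ (|f a| + |⟪Df a, x - a⟫|) + (|f b| + |⟪Df b, x - b⟫|) := by gcongr
      _ ≤ (ρ + ρ * s) + (ρ + ρ * s) := by gcongr
      _ = 2 * ρ + 2 * ρ * s := by ring
  -- ρ inequality
  have hρM' : 8 * (1 + r) * ρ ≤ M * r ^ 2 := by
    rw [le_div_iff₀ (by positivity)] at hρM
    nlinarith [hρM]
  have hρs : 8 * ρ * (1 + s) ≤ M * s ^ 2 := by
    have h1 : 8 * (1 + r) * ρ * (1 + s) ≤ M * r ^ 2 * (1 + s) :=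
      mul_le_mul_of_nonneg_right hρM' (by linarith)
    have h2 : M * r ^ 2 * (1 + s) ≤ M * s ^ 2 * (1 + r) := by
      nlinarith [mul_nonneg (sub_nonneg.2 hs) (show (0:ℝ) ≤ s + r + r * s by positivity)]
    have h3 : (8 * ρ * (1 + s)) * (1 + r) ≤ (M * s ^ 2) * (1 + r) := by
      calc (8 * ρ * (1 + s)) * (1 + r) = 8 * (1 + r) * ρ * (1 + s) := by ring
        _ ≤ M * r ^ 2 * (1 + s) := h1
        _ ≤ M * s ^ 2 * (1 + r) := h2
        _ = (M * s ^ 2) * (1 + r) := by ring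
    exact le_of_mul_le_mul_right h3 (by linarith)
  rw [div_le_iff₀ hdpos]
  calc 2 * |(f a + ⟪Df a, x - a⟫) - (f b + ⟪Df b, x - b⟫)|
      ≤ 2 * (2 * ρ + 2 * ρ * s) := by linarith
    _ = (8 * ρ * (1 + s)) / 2 := by ring
    _ ≤ (M * s ^ 2) / 2 := by linarith
    _ = M * (s ^ 2 / 2) := by ring
    _ ≤ M * (‖a - x‖ ^ 2 + ‖b - x‖ ^ 2) := by
        exact mul_le_mul_of_nonneg_left hdenom hM.le
end

section
/- Let $f: \mathbb{R}^d \to \mathbb{R}$ be differentiable with $|\nabla f(u) - \nabla f(v)| \leq M|u - v|$ for all $u, v$. Then for all $a, b \in \mathbb{R}^d$, $\left|f(b) - f(a) - \frac{1}{2}(\nabla f(a) + \nabla f(b)) \cdot (b - a)\right| \leq \frac{M}{4}|b - a|^2$. -/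
/-!
Split `[a, b]` at its midpoint `m`. The trapezoid error is the difference of the first-order
Taylor remainders of `f` at `a` and at `b`, both evaluated at `m`, and a derivative that is
`M`-Lipschitz makes each of them at most `M / 2 * ‖m - a‖ ^ 2 = M / 8 * ‖b - a‖ ^ 2`.
-/

open scoped RealInnerProductSpace

section

variable {E F : Type*} [NormedAddCommGroup E] [NormedSpace ℝ E]
  [NormedAddCommGroup F] [NormedSpace ℝ F]

theorem norm_image_sub_sub_fderiv_le_of_lipschitz_fderiv {f : E → F} {f' : E → E →L[ℝ] F}
    {M : ℝ} {a b : E} (hf : ∀ x, HasFDerivAt f (f' x) x)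
    (hf' : ∀ x, ‖f' x - f' a‖ ≤ M * ‖x - a‖) :
    ‖f b - f a - f' a (b - a)‖ ≤ M / 2 * ‖b - a‖ ^ 2 := by
  set c := b - a
  let φ : ℝ → F := fun t => f (a + t • c) - f a - t • f' a c
  have hφ : ∀ t, HasDerivAt φ (f' (a + t • c) c - f' a c) t := by
    intro t
    have hline : HasDerivAt (fun s : ℝ => a + s • c) c t := by
      simpa using ((hasDerivAt_id t).smul_const c).const_add a
    exact (((hf _).comp_hasDerivAt t hline).sub_const (f a)).sub
      (by simpa using (hasDerivAt_id t).smul_const (f' a c))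
  have hφ'_le : ∀ t ∈ Set.Ico (0 : ℝ) 1, ‖f' (a + t • c) c - f' a c‖ ≤ M * ‖c‖ ^ 2 * t := by
    intro t ht
    calc ‖f' (a + t • c) c - f' a c‖ = ‖(f' (a + t • c) - f' a) c‖ := rfl
      _ ≤ ‖f' (a + t • c) - f' a‖ * ‖c‖ := (f' (a + t • c) - f' a).le_opNorm c
      _ ≤ M * ‖t • c‖ * ‖c‖ :=
        mul_le_mul_of_nonneg_right (by simpa using hf' (a + t • c)) (norm_nonneg c)
      _ = M * ‖c‖ ^ 2 * t := by rw [norm_smul, Real.norm_of_nonneg ht.1]; ring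
  have hquad : ∀ t, HasDerivAt (fun t => M / 2 * ‖c‖ ^ 2 * t ^ 2) (M * ‖c‖ ^ 2 * t) t :=
    fun t => ((hasDerivAt_pow 2 t).const_mul _).congr_deriv (by push_cast; ring)
  have := image_norm_le_of_norm_deriv_right_le_deriv_boundary
    (fun t _ => (hφ t).continuousAt.continuousWithinAt) (fun t _ => (hφ t).hasDerivWithinAt)
    (by simp [φ]) hquad hφ'_le (Set.right_mem_Icc.2 zero_le_one)
  simpa only [φ, c, one_smul, one_pow, mul_one, add_sub_cancel] using this

theorem norm_trapezoid_error_le_of_lipschitz_fderiv {f : E → F} {f' : E → E →L[ℝ] F} {M : ℝ}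
    (hf : ∀ x, HasFDerivAt f (f' x) x) (hf' : ∀ u v, ‖f' u - f' v‖ ≤ M * ‖u - v‖) (a b : E) :
    ‖f b - f a - (2⁻¹ : ℝ) • (f' a + f' b) (b - a)‖ ≤ M / 4 * ‖b - a‖ ^ 2 := by
  set m := a + (2⁻¹ : ℝ) • (b - a)
  have hma : m - a = (2⁻¹ : ℝ) • (b - a) := by simp [m]
  have hmb : m - b = -((2⁻¹ : ℝ) • (b - a)) := by simp only [m]; module
  have hnorm : ‖(2⁻¹ : ℝ) • (b - a)‖ = ‖b - a‖ / 2 := by rw [norm_smul]; norm_num; ring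
  have rem_a := norm_image_sub_sub_fderiv_le_of_lipschitz_fderiv (b := m) hf (hf' · a)
  have rem_b := norm_image_sub_sub_fderiv_le_of_lipschitz_fderiv (b := m) hf (hf' · b)
  rw [hma, hnorm] at rem_a
  rw [hmb, norm_neg, hnorm] at rem_b
  have split : f b - f a - (2⁻¹ : ℝ) • (f' a + f' b) (b - a) =
      (f m - f a - f' a (m - a)) - (f m - f b - f' b (m - b)) := by
    rw [hma, hmb]; simp only [map_neg, map_smul, add_apply]; module
  calc ‖f b - f a - (2⁻¹ : ℝ) • (f' a + f' b) (b - a)‖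
      ≤ ‖f m - f a - f' a (m - a)‖ + ‖f m - f b - f' b (m - b)‖ := split ▸ norm_sub_le _ _
    _ ≤ M / 2 * (‖b - a‖ / 2) ^ 2 + M / 2 * (‖b - a‖ / 2) ^ 2 := by
      rw [hma, hmb]; exact add_le_add rem_a rem_b
    _ = M / 4 * ‖b - a‖ ^ 2 := by ring

end

/-- Trapezoid-rule error bound: if `f : ℝᵈ → ℝ` is differentiable with `M`-Lipschitz
gradient `g`, then `|f(b) - f(a) - ½(∇f(a) + ∇f(b))·(b - a)| ≤ (M/4)|b - a|²`. -/
theorem stmt10 {d : ℕ} (f : EuclideanSpace ℝ (Fin d) → ℝ)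
    (g : EuclideanSpace ℝ (Fin d) → EuclideanSpace ℝ (Fin d)) (M : ℝ)
    (hdiff : ∀ x, HasGradientAt f (g x) x)
    (hLip : ∀ u v, ‖g u - g v‖ ≤ M * ‖u - v‖) :
    ∀ a b : EuclideanSpace ℝ (Fin d),
      |f b - f a - 2⁻¹ * ⟪g a + g b, b - a⟫| ≤ M / 4 * ‖b - a‖ ^ 2 := by
  intro a b
  let toDual := InnerProductSpace.toDual ℝ (EuclideanSpace ℝ (Fin d))
  have hLip' : ∀ u v, ‖toDual (g u) - toDual (g v)‖ ≤ M * ‖u - v‖ := fun u v => by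
    rw [← map_sub, LinearIsometryEquiv.norm_map]; exact hLip u v
  simpa [toDual, InnerProductSpace.toDual_apply_apply, inner_add_left] using
    norm_trapezoid_error_le_of_lipschitz_fderiv (fun x => (hdiff x).hasFDerivAt) hLip' a b
end
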